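/- arXiv:2008.10177 — 3 statements merged into one kernel-verified Lean document; each statement's English description precedes it below -/
import Mathlib

section
/- Let Y be a real-valued random variable with cumulative distribution function G, and define the generalized inverse G^{-1}(x) := inf{t ∈ ℝ : G(t) ≥ x}. Then Y = G^{-1}(G(Y)) almost surely. -/
/-!
A point `y` at which the law `μ` of `Y` charges every interval `(t, y]` is recovered from its cdf
value, since then `G t < G y` for all `t < y`. The remaining points lie in the countably many sets
`{y > q | μ (q, y] = 0}`, `q ∈ ℚ`, and each of these is `μ`-null: every point of it sees only a null
part of the set to its left, and such a set is covered by countably many null pieces plus one point.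
-/

open MeasureTheory Set

lemma measure_eq_zero_of_forall_measure_inter_Iic_eq_zero (μ : Measure ℝ) {S : Set ℝ}
    (hS : ∀ y ∈ S, μ (S ∩ Iic y) = 0) : μ S = 0 := by
  set U : Set ℝ := ⋃ q : {q : ℚ // μ (S ∩ Iic (q : ℝ)) = 0}, S ∩ Iic (q : ℝ)
  have hU : μ U = 0 := measure_iUnion_null fun q ↦ q.2
  have hmax : ∀ c ∈ S, c ∉ U → S ⊆ U ∪ (S ∩ Iic c) := by
    intro c hcS hcU b hbS
    by_contra hb
    have hcb : c < b := not_le.mp fun hbc ↦ hb (Or.inr ⟨hbS, hbc⟩)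
    obtain ⟨q, hcq, hqb⟩ := exists_rat_btwn hcb
    have hq : μ (S ∩ Iic (q : ℝ)) = 0 :=
      measure_mono_null (inter_subset_inter_right _ (Iic_subset_Iic.mpr hqb.le)) (hS b hbS)
    exact hcU (mem_iUnion.mpr ⟨⟨q, hq⟩, hcS, hcq.le⟩)
  by_cases hc : ∃ c ∈ S, c ∉ U
  · obtain ⟨c, hcS, hcU⟩ := hc
    exact measure_mono_null (hmax c hcS hcU) (measure_union_null hU (hS c hcS))
  · push Not at hc
    exact measure_mono_null hc hU

lemma ae_forall_lt_measure_Ioc_ne_zero (μ : Measure ℝ) :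
    ∀ᵐ y ∂μ, ∀ t < y, μ (Ioc t y) ≠ 0 := by
  have hrat : ∀ q : ℚ, ∀ᵐ y ∂μ, (q : ℝ) < y → μ (Ioc (q : ℝ) y) ≠ 0 := by
    intro q
    rw [ae_iff]
    simp only [Classical.not_imp, not_not]
    apply measure_eq_zero_of_forall_measure_inter_Iic_eq_zero
    rintro y ⟨-, hy⟩
    exact measure_mono_null (fun x hx ↦ (⟨hx.1.1, hx.2⟩ : x ∈ Ioc (q : ℝ) y)) hy
  filter_upwards [ae_all_iff.mpr hrat] with y hy t hty hzero
  obtain ⟨q, htq, hqy⟩ := exists_rat_btwn hty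
  exact hy q hqy (measure_mono_null (Ioc_subset_Ioc_left htq.le) hzero)

lemma measure_Iic_lt_measure_Iic_of_measure_Ioc_ne_zero {μ : Measure ℝ} [IsFiniteMeasure μ]
    {t y : ℝ} (h : μ (Ioc t y) ≠ 0) : μ (Iic t) < μ (Iic y) := by
  have hty : t ≤ y := (nonempty_of_measure_ne_zero h).elim fun _ hx ↦ hx.1.le.trans hx.2
  rw [← Iic_union_Ioc_eq_Iic hty, measure_union (Iic_disjoint_Ioc le_rfl) measurableSet_Ioc]
  exact ENNReal.lt_add_right (measure_ne_top μ _) h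

/-- Let `Y` be a real-valued random variable with cdf `G`, and let
`G⁻¹(x) := inf {t : G t ≥ x}` be the generalized inverse (quantile function).
Then `Y = G⁻¹(G(Y))` almost surely. -/
theorem quantile_cdf_eq_self_ae
    {Ω : Type*} [MeasurableSpace Ω] (P : Measure Ω) [IsProbabilityMeasure P]
    (Y : Ω → ℝ) (hY : Measurable Y)
    (G : ℝ → ℝ) (hG : ∀ t, G t = (P {ω | Y ω ≤ t}).toReal)
    (Ginv : ℝ → ℝ) (hGinv : ∀ x, Ginv x = sInf {t : ℝ | x ≤ G t}) :
    ∀ᵐ ω ∂P, Y ω = Ginv (G (Y ω)) := by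
  have hG_law : ∀ t, G t = (P.map Y (Iic t)).toReal := fun t ↦ by
    rw [hG, Measure.map_apply hY measurableSet_Iic]; rfl
  filter_upwards [ae_of_ae_map hY.aemeasurable (ae_forall_lt_measure_Ioc_ne_zero (P.map Y))]
    with ω hω
  have hG_lt : ∀ t < Y ω, G t < G (Y ω) := fun t ht ↦ by
    rw [hG_law, hG_law]
    exact ENNReal.toReal_strict_mono (measure_ne_top _ _)
      (measure_Iic_lt_measure_Iic_of_measure_Ioc_ne_zero (hω t ht))
  have hleast : IsLeast {t | G (Y ω) ≤ G t} (Y ω) :=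
    ⟨le_refl (G (Y ω)), fun t ht ↦ not_lt.mp fun hlt ↦ (hG_lt t hlt).not_ge ht⟩
  rw [hGinv, hleast.csInf_eq]
end

section
/- Let μ be a probability measure on ℝ, let (g_n)_{n≥1} be a sequence of nondecreasing functions ℝ → ℝ each lying in L²(μ), and suppose g_n → g in L²(μ) for some g ∈ L²(μ). Then there exists a nondecreasing function g̃ : ℝ → ℝ̄ (taking values in the extended reals) such that g̃ = g μ-almost everywhere. In particular, the set of (equivalence classes of) functions in L²(μ) admitting a nondecreasing μ-a.e. representative is closed in L²(μ). -/
open MeasureTheory Filter Topology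

/-! A subsequence of `gₙ` converges to `g` almost everywhere, since `L²` convergence implies
convergence in measure. Pointwise limits of nondecreasing functions are nondecreasing on the set
where they exist, and on a set of full measure `g` is therefore a monotone function into the
complete lattice `EReal`, which extends monotonically to all of `ℝ` by taking suprema from the
left. -/

theorem MonotoneOn.of_tendsto {ι α β : Type*} [Preorder α] [TopologicalSpace β] [Preorder β]
    [OrderClosedTopology β] {l : Filter ι} [l.NeBot] {f : ι → α → β} {g : α → β} {s : Set α}
    (hf : ∀ i, Monotone (f i)) (hfg : ∀ x ∈ s, Tendsto (fun i => f i x) l (𝓝 (g x))) :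
    MonotoneOn g s :=
  fun _ hx _ hy hxy => le_of_tendsto_of_tendsto' (hfg _ hx) (hfg _ hy) fun i => hf i hxy

theorem exists_monotone_ereal_ae_eq_of_ae_tendsto {ι α : Type*} [LinearOrder α]
    [MeasurableSpace α] {μ : Measure α} {l : Filter ι} [l.NeBot] {f : ι → α → ℝ} {g : α → ℝ}
    (hf : ∀ i, Monotone (f i)) (hfg : ∀ᵐ x ∂μ, Tendsto (fun i => f i x) l (𝓝 (g x))) :
    ∃ g' : α → EReal, Monotone g' ∧ ∀ᵐ x ∂μ, g' x = (g x : EReal) := by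
  set s := {x | Tendsto (fun i => f i x) l (𝓝 (g x))}
  have hmono : MonotoneOn (fun x => (g x : EReal)) s :=
    MonotoneOn.of_tendsto (f := fun i x => (f i x : EReal))
      (fun i => EReal.coe_strictMono.monotone.comp (hf i))
      fun x hx => (continuous_coe_real_ereal.tendsto _).comp hx
  obtain ⟨g', hg'_mono, hg'_eq⟩ := hmono.exists_monotone_extension (OrderBot.bddBelow _)
    (OrderTop.bddAbove _)
  exact ⟨g', hg'_mono, hfg.mono fun x hx => (hg'_eq hx).symm⟩

theorem monotone_cone_closed_in_L2_general
    (μ : Measure ℝ)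
    (gseq : ℕ → ℝ → ℝ) (hmono : ∀ n, Monotone (gseq n))
    (g : ℝ → ℝ) (hg : MemLp g 2 μ)
    (hconv : Tendsto (fun n => eLpNorm (gseq n - g) 2 μ) atTop (nhds 0)) :
    ∃ gtil : ℝ → EReal, Monotone gtil ∧ ∀ᵐ x ∂μ, gtil x = (g x : EReal) := by
  have hmeas : TendstoInMeasure μ gseq atTop g :=
    tendstoInMeasure_of_tendsto_eLpNorm two_ne_zero
      (fun n => (hmono n).measurable.aestronglyMeasurable) hg.aestronglyMeasurable hconv
  obtain ⟨φ, -, hφ⟩ := hmeas.exists_seq_tendsto_ae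
  exact exists_monotone_ereal_ae_eq_of_ae_tendsto (fun n => hmono (φ n)) hφ

/-- Let `μ` be a probability measure on `ℝ`, let `(gₙ)` be nondecreasing
functions in `L²(μ)` converging in `L²(μ)` to `g ∈ L²(μ)`. Then `g` has a nondecreasing
`μ`-a.e. representative taking values in the extended reals. (In particular, the set of
classes in `L²(μ)` with a nondecreasing a.e. representative is closed in `L²(μ)`.) -/
theorem monotone_cone_closed_in_L2
    (μ : Measure ℝ) [IsProbabilityMeasure μ]
    (gseq : ℕ → ℝ → ℝ) (hmono : ∀ n, Monotone (gseq n))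
    (hmem : ∀ n, MemLp (gseq n) 2 μ)
    (g : ℝ → ℝ) (hg : MemLp g 2 μ)
    (hconv : Tendsto (fun n => eLpNorm (gseq n - g) 2 μ) atTop (nhds 0)) :
    ∃ gtil : ℝ → EReal, Monotone gtil ∧ ∀ᵐ x ∂μ, gtil x = (g x : EReal) :=
  monotone_cone_closed_in_L2_general μ gseq hmono g hg hconv
end

section
/- Let (X_1,Y_1),…,(X_n,Y_n) be i.i.d. copies of (X,Y). Let ℓ* : ℝ² → ℝ be measurable with E[ℓ*(X,Y)²] < ∞ and with E[ℓ*(X,Y) | X] = 0 almost surely and E[ℓ*(X,Y) | Y] = 0 almost surely. Let q, r : ℝⁿ → ℝ be measurable functions such that q(X_1,…,X_n) and r(Y_1,…,Y_n) are square-integrable. Then Cov( q(X_1,…,X_n) + r(Y_1,…,Y_n), ∑_{i=1}^n ℓ*(X_i,Y_i) ) = 0. -/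
/-!
Expanding the product, it suffices that `E[ℓ*(Xᵢ,Yᵢ)] = 0` and
`E[q(X₁,…,Xₙ) ℓ*(Xᵢ,Yᵢ)] = E[r(Y₁,…,Yₙ) ℓ*(Xᵢ,Yᵢ)] = 0` for every `i`. The sample has the product
law, so by Fubini one may freeze all pairs but the `i`-th; then `q(X₁,…,Xₙ)` becomes a function
`g(Xᵢ)` of `Xᵢ` alone, and `E[g(X) ℓ*(X,Y)] = E[g(X) E[ℓ*(X,Y) | X]] = 0`. The same argument with
`Y` in place of `X` handles `r`.
-/

open MeasureTheory ProbabilityTheory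

section
variable {Ω α β : Type*} {m₀ : MeasurableSpace Ω} {mα : MeasurableSpace α} [MeasurableSpace β]
  {P : Measure Ω} [IsFiniteMeasure P]

theorem integral_comp_mul_eq_zero_of_condExp_comap_eq_zero {U : Ω → α} (hU : Measurable U)
    {f : Ω → ℝ} (hf : Integrable f P) (hcond : P[f | mα.comap U] =ᵐ[P] 0)
    {g : α → ℝ} (hg : Measurable g) (hgf : Integrable (fun ω => g (U ω) * f ω) P) :
    ∫ ω, g (U ω) * f ω ∂P = 0 := by
  have hgU : StronglyMeasurable[mα.comap U] (fun ω => g (U ω)) :=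
    (hg.comp (comap_measurable U)).stronglyMeasurable
  calc ∫ ω, g (U ω) * f ω ∂P = ∫ ω, P[(fun ω => g (U ω)) * f | mα.comap U] ω ∂P :=
        (integral_condExp hU.comap_le).symm
    _ = ∫ ω, ((fun ω => g (U ω)) * P[f | mα.comap U]) ω ∂P :=
        integral_congr_ae (condExp_mul_of_stronglyMeasurable_left hgU hgf hf)
    _ = 0 := by
        rw [integral_congr_ae (hcond.mono fun ω h => show _ = (0 : Ω → ℝ) ω by simp [h])]
        simp

theorem integral_map_comp_mul_eq_zero_of_condExp_eq_zero {V : Ω → β} (hV : Measurable V)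
    {π : β → α} (hπ : Measurable π) {f : β → ℝ} (hf : Measurable f)
    (hfi : Integrable (fun ω => f (V ω)) P)
    (hcond : P[fun ω => f (V ω) | mα.comap fun ω => π (V ω)] =ᵐ[P] 0)
    {g : α → ℝ} (hg : Measurable g) (hgf : Integrable (fun b => g (π b) * f b) (P.map V)) :
    ∫ b, g (π b) * f b ∂P.map V = 0 := by
  have hgf_meas : AEStronglyMeasurable (fun b => g (π b) * f b) (P.map V) :=
    ((hg.comp hπ).mul hf).aestronglyMeasurable
  rw [integral_map hV.aemeasurable hgf_meas]
  exact integral_comp_mul_eq_zero_of_condExp_comap_eq_zero (hπ.comp hV) hfi hcond hg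
    ((integrable_map_measure hgf_meas hV.aemeasurable).1 hgf)
end

theorem integral_eq_zero_of_integral_insertNth_eq_zero {n : ℕ} {α : Fin (n + 1) → Type*}
    [∀ j, MeasurableSpace (α j)] (μ : ∀ j, Measure (α j)) [∀ j, SigmaFinite (μ j)]
    (i : Fin (n + 1)) {Φ : (∀ j, α j) → ℝ} (hΦ : Integrable Φ (Measure.pi μ))
    (hsec : ∀ w, Integrable (fun b => Φ (i.insertNth b w)) (μ i) →
      ∫ b, Φ (i.insertNth b w) ∂μ i = 0) :
    ∫ z, Φ z ∂Measure.pi μ = 0 := by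
  have he := (measurePreserving_piFinSuccAbove μ i).symm
  rw [← he.integrable_comp_emb (MeasurableEquiv.measurableEmbedding _)] at hΦ
  rw [← he.integral_comp',
    integral_prod_symm (fun x => Φ ((MeasurableEquiv.piFinSuccAbove α i).symm x)) hΦ]
  exact integral_eq_zero_of_ae (hΦ.prod_left_ae.mono hsec)

theorem Fin.comp_insertNth {n : ℕ} {β γ : Type*} (π : β → γ) (i : Fin (n + 1)) (b : β)
    (w : Fin n → β) :
    (fun j => π ((i.insertNth b w : Fin (n + 1) → β) j)) = i.insertNth (π b) fun j => π (w j) := by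
  funext j
  induction j using Fin.succAboveCases i <;> simp

namespace ProbabilityTheory

theorem iIndepFun.integral_comp_mul_eq_zero {Ω β γ : Type*} [MeasurableSpace Ω]
    [MeasurableSpace β] [MeasurableSpace γ] {P : Measure Ω} {n : ℕ} {Z : Fin (n + 1) → Ω → β}
    (hZ : ∀ j, Measurable (Z j)) (hind : iIndepFun Z P) {μ : Measure β} [SigmaFinite μ]
    (hlaw : ∀ j, P.map (Z j) = μ) {π : β → γ} (hπ : Measurable π) {f : β → ℝ}
    (hf : Measurable f)
    (horth : ∀ g : γ → ℝ, Measurable g → Integrable (fun b => g (π b) * f b) μ →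
      ∫ b, g (π b) * f b ∂μ = 0)
    {F : (Fin (n + 1) → γ) → ℝ} (hF : Measurable F) (i : Fin (n + 1))
    (hint : Integrable (fun ω => F (fun j => π (Z j ω)) * f (Z i ω)) P) :
    ∫ ω, F (fun j => π (Z j ω)) * f (Z i ω) ∂P = 0 := by
  set Φ : (Fin (n + 1) → β) → ℝ := fun z => F (fun j => π (z j)) * f (z i)
  have hΦ : Measurable Φ :=
    (hF.comp (measurable_pi_lambda _ fun j => hπ.comp (measurable_pi_apply j))).mul
      (hf.comp (measurable_pi_apply i))
  have hZv : Measurable fun ω j => Z j ω := measurable_pi_lambda _ hZ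
  have hmap : P.map (fun ω j => Z j ω) = Measure.pi fun _ => μ := by
    rw [hind.map_fun_eq_pi_map fun j => (hZ j).aemeasurable]
    simp_rw [hlaw]
  change ∫ ω, Φ (fun j => Z j ω) ∂P = 0
  rw [← integral_map hZv.aemeasurable hΦ.aestronglyMeasurable, hmap]
  refine integral_eq_zero_of_integral_insertNth_eq_zero _ i ?_ fun w => ?_
  · rw [← hmap]
    exact (integrable_map_measure hΦ.aestronglyMeasurable hZv.aemeasurable).2 hint
  · simp only [Φ, Fin.comp_insertNth, Fin.insertNth_apply_same]
    exact horth (fun c => F (i.insertNth c fun j => π (w j)))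
      (hF.comp (show Measurable ((MeasurableEquiv.piFinSuccAbove (fun _ => γ) i).symm ∘
        fun c => (c, fun j => π (w j))) by fun_prop))

theorem iIndepFun.integral_comp_mul_eq_zero_of_lt {Ω β γ : Type*} [MeasurableSpace Ω]
    [MeasurableSpace β] [MeasurableSpace γ] {P : Measure Ω} {Z : ℕ → Ω → β}
    (hZ : ∀ j, Measurable (Z j)) (hind : iIndepFun Z P) {μ : Measure β} [SigmaFinite μ]
    (hlaw : ∀ j, P.map (Z j) = μ) {π : β → γ} (hπ : Measurable π) {f : β → ℝ}
    (hf : Measurable f)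
    (horth : ∀ g : γ → ℝ, Measurable g → Integrable (fun b => g (π b) * f b) μ →
      ∫ b, g (π b) * f b ∂μ = 0)
    {n : ℕ} {F : (Fin n → γ) → ℝ} (hF : Measurable F) {i : ℕ} (hi : i < n)
    (hint : Integrable (fun ω => F (fun j => π (Z j ω)) * f (Z i ω)) P) :
    ∫ ω, F (fun j => π (Z j ω)) * f (Z i ω) ∂P = 0 := by
  obtain ⟨m, rfl⟩ := Nat.exists_eq_add_one_of_ne_zero (Nat.ne_zero_of_lt hi)
  exact (hind.precomp Fin.val_injective).integral_comp_mul_eq_zero (fun j => hZ j)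
    (fun j => hlaw j) hπ hf horth hF ⟨i, hi⟩ hint

end ProbabilityTheory

/-- Let `(X₁,Y₁),…,(Xₙ,Yₙ)` be i.i.d. copies of `(X,Y)` and let `ℓ*`
be square-integrable with `E[ℓ*(X,Y) | X] = 0` a.s. and `E[ℓ*(X,Y) | Y] = 0` a.s.
Then for any square-integrable statistics `q(X₁,…,Xₙ)` and `r(Y₁,…,Yₙ)`,
`Cov(q(X₁,…,Xₙ) + r(Y₁,…,Yₙ), ∑ᵢ ℓ*(Xᵢ,Yᵢ)) = 0`. -/
theorem cov_additive_rank_statistic_efficient_score_eq_zero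
    {Ω : Type*} [MeasurableSpace Ω] (P : Measure Ω) [IsProbabilityMeasure P]
    (n : ℕ)
    (X Y : Ω → ℝ) (hXY : Measurable fun ω => (X ω, Y ω))
    (Xs Ys : ℕ → Ω → ℝ)
    (hmeas : ∀ i, Measurable fun ω => (Xs i ω, Ys i ω))
    (hindep : iIndepFun (fun i ω => (Xs i ω, Ys i ω)) P)
    (hident : ∀ i, IdentDistrib (fun ω => (Xs i ω, Ys i ω)) (fun ω => (X ω, Y ω)) P P)
    (l : ℝ → ℝ → ℝ) (hlmeas : Measurable fun p : ℝ × ℝ => l p.1 p.2)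
    (hl2 : MemLp (fun ω => l (X ω) (Y ω)) 2 P)
    (hlX : P[(fun ω => l (X ω) (Y ω)) |
        MeasurableSpace.comap X inferInstance] =ᵐ[P] 0)
    (hlY : P[(fun ω => l (X ω) (Y ω)) |
        MeasurableSpace.comap Y inferInstance] =ᵐ[P] 0)
    (q r : (Fin n → ℝ) → ℝ) (hq : Measurable q) (hr : Measurable r)
    (hq2 : MemLp (fun ω => q (fun i => Xs i ω)) 2 P)
    (hr2 : MemLp (fun ω => r (fun i => Ys i ω)) 2 P) :
    (∫ ω, (q (fun i => Xs i ω) + r (fun i => Ys i ω)) *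
        (∑ i ∈ Finset.range n, l (Xs i ω) (Ys i ω)) ∂P)
      - (∫ ω, q (fun i => Xs i ω) + r (fun i => Ys i ω) ∂P)
        * (∫ ω, ∑ i ∈ Finset.range n, l (Xs i ω) (Ys i ω) ∂P) = 0 := by
  have hl : Integrable (fun ω => l (X ω) (Y ω)) P := hl2.integrable one_le_two
  have hl2_copy (i : ℕ) : MemLp (fun ω => l (Xs i ω) (Ys i ω)) 2 P :=
    ((hident i).comp hlmeas).symm.memLp_snd hl2
  have hmean (i : ℕ) : ∫ ω, l (Xs i ω) (Ys i ω) ∂P = 0 := by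
    refine ((hident i).comp hlmeas).integral_eq.trans ?_
    simpa using integral_comp_mul_eq_zero_of_condExp_comap_eq_zero (measurable_fst.comp hXY) hl
      hlX (measurable_const (a := (1 : ℝ))) (by simpa using hl)
  have hcross (i : ℕ) (hi : i < n) :
      ∫ ω, (q (fun j => Xs j ω) + r (fun j => Ys j ω)) * l (Xs i ω) (Ys i ω) ∂P = 0 := by
    have hql : Integrable (fun ω => q (fun j => Xs j ω) * l (Xs i ω) (Ys i ω)) P :=
      hq2.integrable_mul (hl2_copy i)
    have hrl : Integrable (fun ω => r (fun j => Ys j ω) * l (Xs i ω) (Ys i ω)) P :=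
      hr2.integrable_mul (hl2_copy i)
    simp_rw [add_mul]
    rw [integral_add hql hrl,
      hindep.integral_comp_mul_eq_zero_of_lt hmeas (fun j => (hident j).map_eq) measurable_fst
        hlmeas (fun g hg => integral_map_comp_mul_eq_zero_of_condExp_eq_zero hXY measurable_fst
          hlmeas hl hlX hg) hq hi hql,
      hindep.integral_comp_mul_eq_zero_of_lt hmeas (fun j => (hident j).map_eq) measurable_snd
        hlmeas (fun g hg => integral_map_comp_mul_eq_zero_of_condExp_eq_zero hXY measurable_snd
          hlmeas hl hlY hg) hr hi hrl, add_zero]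
  rw [integral_finsetSum _ fun i _ => (hl2_copy i).integrable one_le_two]
  simp_rw [hmean, Finset.sum_const_zero, mul_zero, sub_zero, Finset.mul_sum]
  refine (integral_finsetSum _ fun i _ => (hq2.add hr2).integrable_mul (hl2_copy i)).trans ?_
  exact Finset.sum_eq_zero fun i hi => hcross i (Finset.mem_range.1 hi)
end
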